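/- Let A be a multiplicative Sidon set of positive integers. Then for all sufficiently large n, |A(n)| ≤ (∑_{n^{2/3} < p ≤ n} χ_{A,n}(p)) + 11·n^{3/4}, where the sum ranges over primes p with n^{2/3} < p ≤ n. -/

import Mathlib

open Finset

/-- `A` is a multiplicative Sidon set: for every `s`, the equation `x * y = s` has at most
one solution (up to ordering) with `x, y ∈ A`. -/
def MulSidon (A : Set ℕ) : Prop :=
  ∀ x ∈ A, ∀ y ∈ A, ∀ z ∈ A, ∀ w ∈ A, x * y = z * w → (x = z ∧ y = w) ∨ (x = w ∧ y = z)

def NoC4 (G : Finset (ℕ × ℕ)) : Prop :=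
  ∀ a a' b b', (a,b) ∈ G → (a,b') ∈ G → (a',b) ∈ G → (a',b') ∈ G → a ≠ a' → b ≠ b' → False

section core
variable (G : Finset (ℕ × ℕ)) (X Y : Finset ℕ)

noncomputable def dd (y : ℕ) : ℕ := (X.filter (fun a => (a,y) ∈ G)).card

lemma core_sum (hsub : G ⊆ X ×ˢ Y) : ∑ y ∈ Y, dd G X y = G.card := by
  classical
  rw [Finset.card_eq_sum_card_fiberwise (f := Prod.snd) (fun e he => (Finset.mem_product.1 (hsub he)).2)]
  refine Finset.sum_congr rfl (fun y hy => ?_)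
  unfold dd
  apply Finset.card_bij (i := fun a _ => (a, y))
  · intro a ha
    simp only [Finset.mem_filter] at ha
    exact Finset.mem_filter.2 ⟨ha.2, rfl⟩
  · intro a ha a' ha' h
    exact congrArg Prod.fst h
  · intro e he
    simp only [Finset.mem_filter] at he
    refine ⟨e.1, ?_, ?_⟩
    · simp only [Finset.mem_filter]
      have := (Finset.mem_product.1 (hsub he.1)).1
      rw [← he.2] at *
      exact ⟨this, he.1⟩
    · rw [← he.2]

lemma core_sq (hsub : G ⊆ X ×ˢ Y) (h4 : NoC4 G) :
    ∑ y ∈ Y, dd G X y * dd G X y ≤ X.card * X.card + G.card := by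
  classical
  have key : ∑ y ∈ Y, (dd G X y * dd G X y - dd G X y) ≤ X.card * X.card := by
    have hcard : ∑ y ∈ Y, (dd G X y * dd G X y - dd G X y)
        = (Y.sigma (fun y => ((X.filter (fun a => (a,y) ∈ G))).offDiag)).card := by
      rw [Finset.card_sigma]
      exact Finset.sum_congr rfl (fun y _ => (Finset.offDiag_card _).symm)
    rw [hcard]
    have : (X ×ˢ X).card = X.card * X.card := Finset.card_product X X
    rw [← this]
    apply Finset.card_le_card_of_injOn (fun z => z.2)
    · rintro ⟨y, a, a'⟩ hz
      simp only [Finset.mem_coe, Finset.mem_sigma, Finset.mem_offDiag, Finset.mem_filter] at hz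
      exact Finset.mem_product.2 ⟨hz.2.1.1, hz.2.2.1.1⟩
    · rintro ⟨y, a, a'⟩ hz ⟨y', c, c'⟩ hz' hecc
      simp only [Finset.coe_sigma, Set.mem_sigma_iff, Finset.mem_coe, Finset.mem_offDiag,
        Finset.mem_filter] at hz hz'
      simp only at hecc
      obtain ⟨h1, h2⟩ := Prod.ext_iff.1 hecc
      simp only at h1 h2
      subst h1; subst h2
      by_cases hyy : y = y'
      · subst hyy; rfl
      · exact absurd (h4 a a' y y' hz.2.1.2 hz'.2.1.2 hz.2.2.1.2 hz'.2.2.1.2 hz.2.2.2 hyy) (fun h => h)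
  calc ∑ y ∈ Y, dd G X y * dd G X y
      = ∑ y ∈ Y, ((dd G X y * dd G X y - dd G X y) + dd G X y) := by
        refine Finset.sum_congr rfl (fun y _ => ?_)
        have : dd G X y ≤ dd G X y * dd G X y := by
          rcases Nat.eq_zero_or_pos (dd G X y) with h | h
          · simp [h]
          · exact Nat.le_mul_of_pos_left _ h
        omega
    _ = (∑ y ∈ Y, (dd G X y * dd G X y - dd G X y)) + ∑ y ∈ Y, dd G X y := Finset.sum_add_distrib
    _ ≤ X.card * X.card + G.card := by
        have := core_sum G X Y hsub
        omega

lemma L1 (hsub : G ⊆ X ×ˢ Y) (h4 : NoC4 G) : G.card ≤ Y.card + X.card * X.card := by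
  have h1 := core_sum G X Y hsub
  have h2 := core_sq G X Y hsub h4
  have h3 : 2 * G.card ≤ Y.card + (X.card * X.card + G.card) := by
    calc 2 * G.card = ∑ y ∈ Y, 2 * dd G X y := by rw [← Finset.mul_sum, h1]
      _ ≤ ∑ y ∈ Y, (1 + dd G X y * dd G X y) := by
          refine Finset.sum_le_sum (fun y _ => ?_)
          rcases Nat.eq_zero_or_pos (dd G X y) with h | h
          · simp [h]
          · nlinarith
      _ = Y.card + ∑ y ∈ Y, dd G X y * dd G X y := by
          rw [Finset.sum_add_distrib, Finset.sum_const, smul_eq_mul, mul_one]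
      _ ≤ Y.card + (X.card * X.card + G.card) := by omega
  omega

lemma L2 (hsub : G ⊆ X ×ˢ Y) (h4 : NoC4 G) :
    (G.card : ℝ) ≤ Y.card + X.card * Real.sqrt Y.card := by
  have h1 := core_sum G X Y hsub
  have h2 := core_sq G X Y hsub h4
  set E := (G.card : ℝ) with hE
  set Xc := (X.card : ℝ)
  set s := Real.sqrt (Y.card : ℝ) with hs
  have hs0 : 0 ≤ s := Real.sqrt_nonneg _
  have hss : s * s = (Y.card : ℝ) := Real.mul_self_sqrt (by positivity)
  have hE0 : 0 ≤ E := by positivity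
  have hX0 : 0 ≤ Xc := by positivity
  have hcs : E ^ 2 ≤ (Y.card : ℝ) * ∑ y ∈ Y, (dd G X y : ℝ) ^ 2 := by
    have := sq_sum_le_card_mul_sum_sq (s := Y) (f := fun y => (dd G X y : ℝ))
    rw [← Nat.cast_sum, h1] at this
    exact this
  have hsum : ∑ y ∈ Y, (dd G X y : ℝ) ^ 2 ≤ Xc * Xc + E := by
    have : ((∑ y ∈ Y, dd G X y * dd G X y : ℕ) : ℝ) ≤ ((X.card * X.card + G.card : ℕ) : ℝ) :=
      Nat.cast_le.2 h2
    push_cast at this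
    calc ∑ y ∈ Y, (dd G X y : ℝ) ^ 2 = ∑ y ∈ Y, ((dd G X y : ℝ) * dd G X y) := by
          refine Finset.sum_congr rfl (fun y _ => by ring)
      _ ≤ Xc * Xc + E := this
  have hq : E ^ 2 ≤ (s*s) * (Xc * Xc) + (s*s) * E := by
    rw [hss]
    nlinarith [Finset.sum_nonneg (fun y (_ : y ∈ Y) => sq_nonneg ((dd G X y : ℝ)))]
  rw [← hss]
  by_contra hcon
  push_neg at hcon
  nlinarith [mul_nonneg hX0 hs0, mul_nonneg (mul_nonneg hX0 hs0) hs0, mul_nonneg hs0 hs0]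

end core

lemma noC4_of_sidon (A : Set ℕ) (hS : MulSidon A) (S : Finset ℕ)
    (hSA : ∀ m ∈ S, m ∈ A ∧ 1 ≤ m) (e : ℕ → ℕ × ℕ)
    (he : ∀ m ∈ S, (e m).1 * (e m).2 = m) : NoC4 (S.image e) := by
  rintro a a' b b' h1 h2 h3 h4 hne hne'
  obtain ⟨m1, hm1, he1⟩ := Finset.mem_image.1 h1
  obtain ⟨m2, hm2, he2⟩ := Finset.mem_image.1 h2
  obtain ⟨m3, hm3, he3⟩ := Finset.mem_image.1 h3
  obtain ⟨m4, hm4, he4⟩ := Finset.mem_image.1 h4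
  have hq1 : a * b = m1 := by rw [← he m1 hm1, he1]
  have hq2 : a * b' = m2 := by rw [← he m2 hm2, he2]
  have hq3 : a' * b = m3 := by rw [← he m3 hm3, he3]
  have hq4 : a' * b' = m4 := by rw [← he m4 hm4, he4]
  have ha0 : 0 < a := by
    rcases Nat.eq_zero_or_pos a with h | h
    · exfalso; have h2 := (hSA m1 hm1).2; rw [← hq1, h] at h2; omega
    · exact h
  have hb0 : 0 < b := by
    rcases Nat.eq_zero_or_pos b with h | h
    · exfalso; have h2 := (hSA m1 hm1).2; rw [← hq1, h] at h2; omega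
    · exact h
  have hmul : m1 * m4 = m2 * m3 := by rw [← hq1, ← hq2, ← hq3, ← hq4]; ring
  rcases hS m1 (hSA m1 hm1).1 m4 (hSA m4 hm4).1 m2 (hSA m2 hm2).1 m3 (hSA m3 hm3).1 hmul with
    ⟨h12, _⟩ | ⟨h13, _⟩
  · rw [← hq1, ← hq2] at h12
    exact hne' (Nat.eq_of_mul_eq_mul_left ha0 h12)
  · rw [← hq1, ← hq3] at h13
    exact hne (Nat.eq_of_mul_eq_mul_right hb0 h13)

lemma real_step (n a b : ℕ) (hn : 1 ≤ n) (ha : ⌊(n:ℝ)^((2:ℝ)/3)⌋₊ < a) (hab : a * b ≤ n) :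
    b * b ≤ ⌊(n:ℝ)^((2:ℝ)/3)⌋₊ := by
  set K : ℝ := (n:ℝ)^((2:ℝ)/3) with hK
  have hn0 : (0:ℝ) < n := by exact_mod_cast hn
  have hK0 : 0 < K := Real.rpow_pos_of_pos hn0 _
  have hKa : K < a := by
    have h1 : K < (⌊K⌋₊ : ℝ) + 1 := Nat.lt_floor_add_one K
    have h2 : (⌊K⌋₊ : ℝ) + 1 ≤ a := by exact_mod_cast ha
    linarith
  have hcube : K * K * K = (n:ℝ) * n := by
    have : K^(3:ℕ) = (n:ℝ)^(((2:ℝ)/3) * 3) := by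
      rw [hK, ← Real.rpow_natCast ((n:ℝ)^((2:ℝ)/3)) 3, ← Real.rpow_mul (le_of_lt hn0)]
      norm_num
    have h2 : (n:ℝ)^(((2:ℝ)/3) * 3) = (n:ℝ)^(2:ℕ) := by
      rw [← Real.rpow_natCast (n:ℝ) 2]; norm_num
    rw [h2] at this
    nlinarith [this]
  have habR : (a:ℝ) * b ≤ n := by exact_mod_cast hab
  have hb2 : ((b*b : ℕ) : ℝ) ≤ K := by
    push_cast
    have hbb : (0:ℝ) ≤ (b:ℝ) := by positivity
    have h1 : (a:ℝ)*b*((a:ℝ)*b) ≤ (n:ℝ)*n :=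
      mul_le_mul habR habR (by positivity) hn0.le
    have h2 : K*K*((b:ℝ)*b) ≤ (a:ℝ)*(a:ℝ)*((b:ℝ)*b) := by
      nlinarith [mul_nonneg (mul_nonneg (sub_nonneg.2 hKa.le) (by positivity : (0:ℝ) ≤ (a:ℝ) + K)) (mul_nonneg hbb hbb)]
    have h3 : K*K*((b:ℝ)*b) ≤ K*K*K := by nlinarith
    exact le_of_mul_le_mul_left h3 (by positivity)
  exact Nat.le_floor hb2

lemma exists_balanced_divisor (n m : ℕ) (hn : 1 ≤ n) (hm : 1 ≤ m) (hmn : m ≤ n)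
    (hq : ∀ q, q.Prime → q ∣ m → q ≤ ⌊(n:ℝ)^((2:ℝ)/3)⌋₊) :
    ∃ b, b ∣ m ∧ 1 ≤ b ∧ b ≤ ⌊(n:ℝ)^((2:ℝ)/3)⌋₊ ∧ m ≤ b * b := by
  classical
  set Kn := ⌊(n:ℝ)^((2:ℝ)/3)⌋₊ with hKn
  have hKn1 : 1 ≤ Kn := by
    apply Nat.le_floor
    push_cast
    exact Real.one_le_rpow (by exact_mod_cast hn) (by norm_num)
  set D := m.divisors.filter (fun d => d ≤ Kn) with hD
  have hone : 1 ∈ D := by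
    rw [hD, Finset.mem_filter, Nat.mem_divisors]
    exact ⟨⟨one_dvd m, by omega⟩, hKn1⟩
  have hDne : D.Nonempty := ⟨1, hone⟩
  set b := D.max' hDne with hb
  have hbD : b ∈ D := D.max'_mem hDne
  rw [hD, Finset.mem_filter, Nat.mem_divisors] at hbD
  obtain ⟨⟨hbdvd, _⟩, hbK⟩ := hbD
  have hb1 : 1 ≤ b := Nat.pos_of_dvd_of_pos hbdvd (by omega)
  have hmax : ∀ d, d ∣ m → d ≤ Kn → d ≤ b := by
    intro d hd hdK
    apply D.le_max' d
    rw [hD, Finset.mem_filter, Nat.mem_divisors]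
    exact ⟨⟨hd, by omega⟩, hdK⟩
  refine ⟨b, hbdvd, hb1, hbK, ?_⟩
  by_contra hlt
  push_neg at hlt
  set a := m / b with ha
  have hab : a * b = m := Nat.div_mul_cancel hbdvd
  have hba : b < a := by
    by_contra hba
    push_neg at hba
    nlinarith
  have hadvd : a ∣ m := ⟨b, hab.symm⟩
  have haK : Kn < a := by
    by_contra haK
    push_neg at haK
    exact absurd (hmax a hadvd haK) (by omega)
  have hbbK : b * b ≤ Kn := real_step n a b hn haK (hab ▸ hmn)
  have ha2 : 2 ≤ a := by omega
  obtain ⟨q, hqp, hqa⟩ := Nat.exists_prime_and_dvd (by omega : a ≠ 1)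
  have hqm : q ∣ m := hqa.trans hadvd
  have hqb : q ≤ b := hmax q hqm (hq q hqp hqm)
  have hbqm : b * q ∣ m := by
    obtain ⟨c, hc⟩ := hqa
    exact ⟨c, by rw [← hab, hc]; ring⟩
  have hbqK : Kn < b * q := by
    by_contra hh
    push_neg at hh
    have := hmax (b*q) hbqm hh
    nlinarith [hqp.two_le]
  have : Kn < b * b := lt_of_lt_of_le hbqK (by nlinarith)
  omega

lemma sqrt_pow_two (j : ℕ) : Real.sqrt ((2:ℝ)^j) = (Real.sqrt 2)^j := by
  rw [show ((2:ℝ)^j) = ((Real.sqrt 2)^j)^2 by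
    rw [← pow_mul, mul_comm, pow_mul, Real.sq_sqrt (by norm_num : (0:ℝ) ≤ 2)]]
  exact Real.sqrt_sq (by positivity)

lemma sqrt2_lb : (1.4 : ℝ) ≤ Real.sqrt 2 := by
  nlinarith [Real.sq_sqrt (by norm_num : (0:ℝ) ≤ 2), Real.sqrt_nonneg 2]

lemma geom_rho (M : ℕ) :
    ∑ j ∈ Finset.range (M+1), 2*(2*Real.sqrt 2)^j ≤ (16/5) * (2*Real.sqrt 2)^M := by
  set ρ : ℝ := 2*Real.sqrt 2 with hρ
  have hρ2 : (2.8:ℝ) ≤ ρ := by have := sqrt2_lb; rw [hρ]; linarith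
  have hρ1 : (1:ℝ) < ρ := by linarith
  rw [← Finset.mul_sum, geom_sum_eq (ne_of_gt hρ1) (M+1)]
  have hpos : (0:ℝ) < ρ - 1 := by linarith
  have hρM : (0:ℝ) < ρ^M := by positivity
  rw [mul_div_assoc', div_le_iff₀ hpos, pow_succ]
  nlinarith

lemma geom_c (a b : ℕ) (c : ℝ) (h0 : 0 ≤ c) (h1 : c < 1) :
    ∑ j ∈ Finset.Ico a b, c^j ≤ c^a * (1/(1-c)) := by
  have h1c : (0:ℝ) < 1 - c := by linarith
  rcases le_or_gt a b with hab | hab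
  · rw [Finset.sum_Ico_eq_sum_range]
    have heq : ∀ i ∈ Finset.range (b-a), c^(a+i) = c^a * c^i :=
      fun i _ => pow_add c a i
    rw [Finset.sum_congr rfl heq, ← Finset.mul_sum]
    apply mul_le_mul_of_nonneg_left _ (by positivity)
    rw [geom_sum_eq (ne_of_lt h1), div_le_iff_of_neg (by linarith : c - 1 < 0)]
    have hm : (1:ℝ)/(1-c)*(c-1) = -1 := by field_simp; ring
    rw [hm]
    have := pow_nonneg h0 (b-a)
    linarith
  · rw [Finset.Ico_eq_empty (by omega)]
    simp
    positivity

lemma sqrt34 (x : ℝ) (hx : 0 < x) :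
    Real.sqrt x * Real.sqrt (Real.sqrt x) = x ^ ((3:ℝ)/4) := by
  rw [Real.sqrt_eq_rpow, Real.sqrt_eq_rpow, ← Real.rpow_mul hx.le, ← Real.rpow_add hx]
  norm_num

set_option maxHeartbeats 2000000 in
theorem stmt_9 (A : Set ℕ) (hpos : ∀ a ∈ A, 0 < a) (hS : MulSidon A) :
    ∃ N : ℕ, ∀ n : ℕ, N ≤ n →
      (Nat.card ↥(A ∩ Set.Icc 1 n) : ℝ)
        ≤ (Nat.card {p : ℕ | p.Prime ∧ (n : ℝ) ^ ((2 : ℝ) / 3) < (p : ℝ) ∧ p ≤ n ∧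
            ∃ a ∈ A ∩ Set.Icc 1 n, p ∣ a} : ℝ) + 11 * (n : ℝ) ^ ((3 : ℝ) / 4) := by
  classical
  refine ⟨2, fun n hn => ?_⟩
  have hn1 : 1 ≤ n := by omega
  have hnne : n ≠ 0 := by omega
  have hn0R : (0:ℝ) < n := by exact_mod_cast hn1
  set Kn := ⌊(n:ℝ)^((2:ℝ)/3)⌋₊ with hKnd
  have hKn1 : 1 ≤ Kn := by
    apply Nat.le_floor
    push_cast
    exact Real.one_le_rpow (by exact_mod_cast hn1) (by norm_num)
  set Fn : Finset ℕ := (Finset.Icc 1 n).filter (fun m => m ∈ A) with hFnd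
  have hFnA : ∀ m ∈ Fn, m ∈ A ∧ 1 ≤ m ∧ m ≤ n := by
    intro m hm
    rw [hFnd, Finset.mem_filter, Finset.mem_Icc] at hm
    exact ⟨hm.2, hm.1.1, hm.1.2⟩
  have hmemFn : ∀ m : ℕ, m ∈ A ∩ Set.Icc 1 n ↔ m ∈ Fn := by
    intro m
    rw [hFnd, Finset.mem_filter, Finset.mem_Icc]
    constructor
    · rintro ⟨hA, h1, h2⟩; exact ⟨⟨h1, h2⟩, hA⟩
    · rintro ⟨⟨h1, h2⟩, hA⟩; exact ⟨hA, h1, h2⟩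
  have hcardA : (Nat.card ↥(A ∩ Set.Icc 1 n)) = Fn.card := by
    have hset : (A ∩ Set.Icc 1 n : Set ℕ) = ↑Fn := Set.ext (fun m => by rw [hmemFn]; simp)
    rw [hset, Nat.card_coe_set_eq, Set.ncard_coe_finset]
  have hfl : ∀ p : ℕ, ((n:ℝ)^((2:ℝ)/3) < p ↔ Kn < p) := by
    intro p
    rw [hKnd]
    exact (Nat.floor_lt (by positivity)).symm
  set Yχ := (Finset.Icc 1 n).filter (fun p => p.Prime ∧ Kn < p ∧ ∃ a ∈ Fn, p ∣ a) with hYd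
  have hcardχ : (Nat.card {p : ℕ | p.Prime ∧ (n : ℝ) ^ ((2 : ℝ) / 3) < (p : ℝ) ∧ p ≤ n ∧
      ∃ a ∈ A ∩ Set.Icc 1 n, p ∣ a}) = Yχ.card := by
    have hset : {p : ℕ | p.Prime ∧ (n : ℝ) ^ ((2 : ℝ) / 3) < (p : ℝ) ∧ p ≤ n ∧
        ∃ a ∈ A ∩ Set.Icc 1 n, p ∣ a} = ↑Yχ := by
      ext p
      simp only [Set.mem_setOf_eq, hYd, Finset.coe_filter, Finset.mem_Icc, Set.mem_setOf_eq]
      constructor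
      · rintro ⟨hp, hlt, hpn, a, ha, hd⟩
        exact ⟨⟨hp.one_lt.le, hpn⟩, hp, (hfl p).1 hlt, a, (hmemFn a).1 ha, hd⟩
      · rintro ⟨⟨_, hpn⟩, hp, hlt, a, ha, hd⟩
        exact ⟨hp, (hfl p).2 hlt, hpn, a, (hmemFn a).2 ha, hd⟩
    rw [hset, Nat.card_coe_set_eq, Set.ncard_coe_finset]
  -- split Fn
  set P : ℕ → Prop := fun m => ∃ p, p.Prime ∧ p ∣ m ∧ Kn < p with hPd
  set F1 := Fn.filter P with hF1d
  set F2 := Fn.filter (fun m => ¬ P m) with hF2d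
  have hsplitc : F1.card + F2.card = Fn.card := Finset.card_filter_add_card_filter_not _
  have hF1Fn : F1 ⊆ Fn := Finset.filter_subset _ _
  have hF2Fn : F2 ⊆ Fn := Finset.filter_subset _ _
  ---- Case 1 bound
  set psel : ℕ → ℕ := fun m => if h : P m then h.choose else 1 with hpseld
  have hpsel : ∀ m, (h : P m) → (psel m).Prime ∧ psel m ∣ m ∧ Kn < psel m := by
    intro m h
    rw [hpseld]
    simp only [dif_pos h]
    exact h.choose_spec
  set e1 : ℕ → ℕ × ℕ := fun m => (m / psel m, psel m) with he1d
  have he1 : ∀ m ∈ F1, (e1 m).1 * (e1 m).2 = m := by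
    intro m hm
    have hPm : P m := (Finset.mem_filter.1 hm).2
    exact Nat.div_mul_cancel (hpsel m hPm).2.1
  set B1 := n / (Kn + 1) with hB1d
  set G1 := F1.image e1 with hG1d
  have hG1card : G1.card = F1.card := by
    rw [hG1d]
    apply Finset.card_image_of_injOn
    intro m hm m' hm' hee
    rw [← he1 m (Finset.mem_coe.1 hm), ← he1 m' (Finset.mem_coe.1 hm'), hee]
  have hsub1 : G1 ⊆ (Finset.Icc 1 B1) ×ˢ Yχ := by
    intro z hz
    obtain ⟨m, hm, hzm⟩ := Finset.mem_image.1 hz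
    have hPm : P m := (Finset.mem_filter.1 hm).2
    obtain ⟨hp, hdvd, hKp⟩ := hpsel m hPm
    obtain ⟨hmA, hm1, hmn⟩ := hFnA m (hF1Fn hm)
    subst hzm
    rw [Finset.mem_product]
    constructor
    · rw [Finset.mem_Icc]
      constructor
      · exact Nat.div_pos (Nat.le_of_dvd (by omega) hdvd) hp.pos
      · rw [hB1d]
        apply Nat.le_div_iff_mul_le (by omega) |>.2
        calc (m / psel m) * (Kn + 1) ≤ (m / psel m) * psel m := by
              apply Nat.mul_le_mul_left
              omega
          _ = m := Nat.div_mul_cancel hdvd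
          _ ≤ n := hmn
    · rw [hYd, Finset.mem_filter, Finset.mem_Icc]
      refine ⟨⟨hp.one_lt.le, le_trans (Nat.le_of_dvd (by omega) hdvd) hmn⟩, hp, hKp, m, hF1Fn hm, hdvd⟩
  have h41 : NoC4 G1 := by
    rw [hG1d]
    exact noC4_of_sidon A hS F1
      (fun m hm => ⟨(hFnA m (hF1Fn hm)).1, (hFnA m (hF1Fn hm)).2.1⟩) e1 he1
  have hF1card : F1.card ≤ Yχ.card + B1 * B1 := by
    have := L1 G1 (Finset.Icc 1 B1) Yχ hsub1 h41
    rw [hG1card] at this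
    have hIcc : (Finset.Icc 1 B1).card = B1 := by rw [Nat.card_Icc, Nat.add_sub_cancel]
    rw [hIcc] at this
    omega
  have hB1Kn : B1 * B1 ≤ Kn := by
    apply real_step n (Kn + 1) B1 hn1 (by omega)
    calc (Kn + 1) * B1 = B1 * (Kn + 1) := by ring
      _ ≤ n := Nat.div_mul_le_self n (Kn + 1)
  ---- Case 2 bound
  have hQ : ∀ m ∈ F2, ∃ b, b ∣ m ∧ 1 ≤ b ∧ b ≤ Kn ∧ m ≤ b * b := by
    intro m hm
    obtain ⟨hmA, hm1, hmn⟩ := hFnA m (hF2Fn hm)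
    have hnP : ¬ P m := (Finset.mem_filter.1 hm).2
    apply exists_balanced_divisor n m hn1 hm1 hmn
    intro q hq hqd
    by_contra hc
    push_neg at hc
    exact hnP ⟨q, hq, hqd, hc⟩
  set bsel : ℕ → ℕ := fun m => if h : ∃ b, b ∣ m ∧ 1 ≤ b ∧ b ≤ Kn ∧ m ≤ b * b then h.choose else 1
    with hbseld
  have hbsel : ∀ m ∈ F2, bsel m ∣ m ∧ 1 ≤ bsel m ∧ bsel m ≤ Kn ∧ m ≤ bsel m * bsel m := by
    intro m hm
    have h := hQ m hm
    rw [hbseld]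
    simp only [dif_pos h]
    exact h.choose_spec
  set e2 : ℕ → ℕ × ℕ := fun m => (m / bsel m, bsel m) with he2d
  have he2 : ∀ m ∈ F2, (e2 m).1 * (e2 m).2 = m := by
    intro m hm
    exact Nat.div_mul_cancel (hbsel m hm).1
  set J := Nat.log 2 Kn with hJd
  have hfib : ∀ m ∈ F2, Nat.log 2 (bsel m) ∈ Finset.range (J+1) := by
    intro m hm
    rw [Finset.mem_range, Nat.lt_succ_iff, hJd]
    exact Nat.log_mono_right (hbsel m hm).2.2.1
  have hF2card : F2.card
      = ∑ j ∈ Finset.range (J+1), (F2.filter (fun m => Nat.log 2 (bsel m) = j)).card :=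
    Finset.card_eq_sum_card_fiberwise hfib
  set xj : ℕ → ℕ := fun j => min (2^(j+1)) (n / 2^j) with hxjd
  have hclass : ∀ j, ((F2.filter (fun m => Nat.log 2 (bsel m) = j)).card : ℝ)
      ≤ (2:ℝ)^j + (xj j : ℝ) * Real.sqrt ((2:ℝ)^j) := by
    intro j
    set F2j := F2.filter (fun m => Nat.log 2 (bsel m) = j) with hF2jd
    have hF2jF2 : F2j ⊆ F2 := Finset.filter_subset _ _
    set X := Finset.Icc 1 (xj j) with hXd
    set Y := Finset.Ico (2^j) (2^(j+1)) with hYjd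
    have hsub : (F2j.image e2) ⊆ X ×ˢ Y := by
      intro z hz
      obtain ⟨m, hm, hzm⟩ := Finset.mem_image.1 hz
      have hmF2 : m ∈ F2 := hF2jF2 hm
      obtain ⟨hdvd, hb1, hbKn, hbb⟩ := hbsel m hmF2
      obtain ⟨hmA, hm1, hmn⟩ := hFnA m (hF2Fn hmF2)
      have hlog : Nat.log 2 (bsel m) = j := (Finset.mem_filter.1 hm).2
      subst hzm
      rw [Finset.mem_product]
      have hblo : 2^j ≤ bsel m := by
        rw [← hlog]; exact Nat.pow_log_le_self 2 (by omega)
      have hbhi : bsel m < 2^(j+1) := by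
        rw [← hlog]; exact Nat.lt_pow_succ_log_self (by norm_num) _
      constructor
      · rw [hXd, Finset.mem_Icc]
        have hale : m / bsel m ≤ bsel m := by
          calc m / bsel m ≤ (bsel m * bsel m) / bsel m := Nat.div_le_div_right hbb
            _ = bsel m := Nat.mul_div_cancel_left _ (by omega)
        refine ⟨Nat.div_pos (Nat.le_of_dvd (by omega) hdvd) (by omega), le_min ?_ ?_⟩
        · exact le_trans hale (le_of_lt hbhi)
        · apply Nat.le_div_iff_mul_le (by positivity) |>.2
          calc (m / bsel m) * 2^j ≤ (m / bsel m) * bsel m := Nat.mul_le_mul_left _ hblo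
            _ = m := Nat.div_mul_cancel hdvd
            _ ≤ n := hmn
      · rw [hYjd, Finset.mem_Ico]
        exact ⟨hblo, hbhi⟩
    have h42 : NoC4 (F2j.image e2) :=
      noC4_of_sidon A hS F2j
        (fun m hm => ⟨(hFnA m (hF2Fn (hF2jF2 hm))).1, (hFnA m (hF2Fn (hF2jF2 hm))).2.1⟩) e2
        (fun m hm => he2 m (hF2jF2 hm))
    have himg : (F2j.image e2).card = F2j.card := by
      apply Finset.card_image_of_injOn
      intro m hm m' hm' hee
      rw [← he2 m (hF2jF2 (Finset.mem_coe.1 hm)), ← he2 m' (hF2jF2 (Finset.mem_coe.1 hm')), hee]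
    have hL2 := L2 (F2j.image e2) X Y hsub h42
    rw [himg] at hL2
    have hYc : Y.card = 2^j := by
      rw [hYjd, Nat.card_Ico]
      have : 2^(j+1) = 2^j * 2 := pow_succ 2 j
      omega
    have hXc : X.card = xj j := by rw [hXd, Nat.card_Icc]; omega
    rw [hYc, hXc] at hL2
    calc (F2j.card : ℝ) ≤ ((2^j : ℕ) : ℝ) + (xj j : ℝ) * Real.sqrt ((2^j : ℕ) : ℝ) := hL2
      _ = (2:ℝ)^j + (xj j : ℝ) * Real.sqrt ((2:ℝ)^j) := by push_cast; ring_nf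
  -- sum the class bounds
  set r := Real.sqrt 2 with hrd
  have hr0 : (0:ℝ) < r := by rw [hrd]; positivity
  have hr14 : (1.4:ℝ) ≤ r := sqrt2_lb
  have hrr : r * r = 2 := Real.mul_self_sqrt (by norm_num)
  set c := r⁻¹ with hcd
  have hc0 : (0:ℝ) ≤ c := by positivity
  have hc57 : c ≤ 5/7 := by
    rw [hcd]
    calc r⁻¹ ≤ (7/5:ℝ)⁻¹ := by
          apply inv_anti₀ (by norm_num)
          linarith
      _ = 5/7 := by norm_num
  have hc1 : c < 1 := by linarith
  set jA := Nat.log 4 n with hjAd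
  set M := max J jA with hMd
  set n34 := Real.sqrt (n:ℝ) * Real.sqrt (Real.sqrt (n:ℝ)) with hn34d
  have hn34pos : 0 < n34 := by rw [hn34d]; positivity
  -- pointwise bound
  set g : ℕ → ℝ := fun j => if j ≤ jA then 2*(2*r)^j else (n:ℝ)*c^j with hgd
  have hgnn : ∀ j, 0 ≤ g j := by
    intro j
    rw [hgd]
    by_cases h : j ≤ jA
    · simp only [if_pos h]; positivity
    · simp only [if_neg h]; positivity
  have hpoint : ∀ j, (xj j : ℝ) * Real.sqrt ((2:ℝ)^j) ≤ g j := by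
    intro j
    rw [hgd, sqrt_pow_two]
    by_cases h : j ≤ jA
    · simp only [if_pos h]
      have hx : (xj j : ℝ) ≤ 2 * 2^j := by
        have : xj j ≤ 2^(j+1) := min_le_left _ _
        calc (xj j : ℝ) ≤ ((2^(j+1) : ℕ) : ℝ) := by exact_mod_cast this
          _ = 2 * 2^j := by push_cast [pow_succ]; ring
      calc (xj j : ℝ) * r^j ≤ (2 * 2^j) * r^j := by
            apply mul_le_mul_of_nonneg_right hx (by positivity)
        _ = 2*(2*r)^j := by rw [mul_pow]; ring
    · simp only [if_neg h]
      have hx2 : (xj j : ℝ) * 2^j ≤ n := by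
        have h1 : xj j ≤ n / 2^j := min_le_right _ _
        have h2 : xj j * 2^j ≤ n := (Nat.le_div_iff_mul_le (by positivity)).1 h1
        calc (xj j : ℝ) * 2^j = ((xj j * 2^j : ℕ) : ℝ) := by push_cast; ring
          _ ≤ n := by exact_mod_cast h2
      have hrj : r^j = 2^j * c^j := by
        have h2c : (2:ℝ)*c = r := by
          rw [hcd]
          field_simp
          linarith [hrr]
        rw [← mul_pow, h2c]
      calc (xj j : ℝ) * r^j = ((xj j : ℝ) * 2^j) * c^j := by rw [hrj]; ring
        _ ≤ (n:ℝ) * c^j := mul_le_mul_of_nonneg_right hx2 (by positivity)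
  -- total of g over range (M+1)
  have hsumg : ∑ j ∈ Finset.range (M+1), g j ≤ (16/5) * n34 + (7/2) * n34 := by
    have hsplit2 : ∑ j ∈ Finset.range (M+1), g j
        = ∑ j ∈ Finset.range (jA+1), g j + ∑ j ∈ Finset.Ico (jA+1) (M+1), g j := by
      rw [Finset.range_eq_Ico, ← Finset.sum_Ico_consecutive g (Nat.zero_le (jA+1)) (by omega : jA+1 ≤ M+1), Finset.range_eq_Ico]
    rw [hsplit2]
    have hpart1 : ∑ j ∈ Finset.range (jA+1), g j ≤ (16/5) * n34 := by
      have heq : ∀ j ∈ Finset.range (jA+1), g j = 2*(2*r)^j := by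
        intro j hj
        rw [Finset.mem_range] at hj
        rw [hgd]
        exact if_pos (by omega)
      rw [Finset.sum_congr rfl heq]
      calc ∑ j ∈ Finset.range (jA+1), 2*(2*r)^j ≤ (16/5) * (2*r)^jA := geom_rho jA
        _ ≤ (16/5) * n34 := by
            apply mul_le_mul_of_nonneg_left _ (by norm_num)
            -- (2r)^jA ≤ n34
            have h4j : ((4:ℕ)^jA : ℕ) ≤ n := Nat.pow_log_le_self 4 hnne
            set t := (2:ℝ)^jA with htd
            have ht0 : (0:ℝ) < t := by positivity
            have ht2 : t^2 ≤ (n:ℝ) := by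
              have h4R : ((4:ℝ))^jA ≤ n := by
                calc ((4:ℝ))^jA = ((4^jA : ℕ) : ℝ) := by push_cast; ring
                  _ ≤ n := by exact_mod_cast h4j
              calc t^2 = (2:ℝ)^jA * (2:ℝ)^jA := by rw [htd]; ring
                _ = (4:ℝ)^jA := by rw [← mul_pow]; norm_num
                _ ≤ n := h4R
            have htsq : t ≤ Real.sqrt n := (Real.le_sqrt ht0.le (by positivity)).2 ht2
            have hsq : Real.sqrt t ≤ Real.sqrt (Real.sqrt n) := Real.sqrt_le_sqrt htsq
            calc (2*r)^jA = t * r^jA := by rw [mul_pow, htd]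
              _ = t * Real.sqrt t := by rw [← sqrt_pow_two, htd]
              _ ≤ Real.sqrt n * Real.sqrt (Real.sqrt n) := by
                  apply mul_le_mul htsq hsq (Real.sqrt_nonneg _) (Real.sqrt_nonneg _)
              _ = n34 := by rw [hn34d]
    have hpart2 : ∑ j ∈ Finset.Ico (jA+1) (M+1), g j ≤ (7/2) * n34 := by
      have heq : ∀ j ∈ Finset.Ico (jA+1) (M+1), g j = (n:ℝ)*c^j := by
        intro j hj
        rw [hgd]
        rw [Finset.mem_Ico] at hj
        simp only [if_neg (by omega : ¬ j ≤ jA)]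
      rw [Finset.sum_congr rfl heq, ← Finset.mul_sum]
      have hgeo := geom_c (jA+1) (M+1) c hc0 hc1
      have hcjA : (n:ℝ) * c^(jA+1) ≤ n34 := by
        set u := (2:ℝ)^(jA+1) with hud
        have hu0 : (0:ℝ) < u := by positivity
        have hnu : (n:ℝ) ≤ u * u := by
          have h4 : n < 4^(jA+1) := Nat.lt_pow_succ_log_self (by norm_num) n
          have : (n:ℝ) < ((4:ℕ)^(jA+1) : ℕ) := by exact_mod_cast h4
          calc (n:ℝ) ≤ ((4^(jA+1) : ℕ) : ℝ) := le_of_lt this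
            _ = (4:ℝ)^(jA+1) := by push_cast; ring
            _ = u * u := by rw [hud, ← mul_pow]; norm_num
        have hsqn : Real.sqrt n ≤ u := by
          calc Real.sqrt n ≤ Real.sqrt (u*u) := Real.sqrt_le_sqrt hnu
            _ = u := Real.sqrt_mul_self hu0.le
        have hru : r^(jA+1) = Real.sqrt u := by rw [← sqrt_pow_two, hud]
        have hssn : Real.sqrt (Real.sqrt n) ≤ r^(jA+1) := by
          rw [hru]; exact Real.sqrt_le_sqrt hsqn
        have hssn0 : (0:ℝ) < Real.sqrt (Real.sqrt n) := by positivity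
        have hcle : c^(jA+1) ≤ (Real.sqrt (Real.sqrt n))⁻¹ := by
          rw [hcd, inv_pow]
          exact inv_anti₀ hssn0 hssn
        have hkey : n34 * Real.sqrt (Real.sqrt n) = n := by
          rw [hn34d, mul_assoc, Real.mul_self_sqrt (Real.sqrt_nonneg _),
            Real.mul_self_sqrt hn0R.le]
        calc (n:ℝ) * c^(jA+1) ≤ (n:ℝ) * (Real.sqrt (Real.sqrt n))⁻¹ :=
              mul_le_mul_of_nonneg_left hcle hn0R.le
          _ = n34 := by
              field_simp [ne_of_gt hssn0]
              linarith [hkey]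
      calc (n:ℝ) * ∑ j ∈ Finset.Ico (jA+1) (M+1), c^j
          ≤ (n:ℝ) * (c^(jA+1) * (1/(1-c))) := mul_le_mul_of_nonneg_left hgeo hn0R.le
        _ = ((n:ℝ) * c^(jA+1)) * (1/(1-c)) := by ring
        _ ≤ n34 * (7/2) := by
            apply mul_le_mul hcjA _ (one_div_nonneg.2 (by linarith)) hn34pos.le
            rw [div_le_div_iff₀ (by linarith) (by norm_num)]
            linarith
        _ = (7/2) * n34 := by ring
    linarith
  -- combine case 2
  have hF2R : (F2.card : ℝ) ≤ 2 * Kn + ((16/5) * n34 + (7/2) * n34) := by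
    have h1 : (F2.card : ℝ) = ∑ j ∈ Finset.range (J+1),
        ((F2.filter (fun m => Nat.log 2 (bsel m) = j)).card : ℝ) := by
      rw [hF2card]; push_cast; ring
    rw [h1]
    have h2 : ∑ j ∈ Finset.range (J+1),
        ((F2.filter (fun m => Nat.log 2 (bsel m) = j)).card : ℝ)
        ≤ ∑ j ∈ Finset.range (J+1), ((2:ℝ)^j + (xj j : ℝ) * Real.sqrt ((2:ℝ)^j)) :=
      Finset.sum_le_sum (fun j _ => hclass j)
    have h3 : ∑ j ∈ Finset.range (J+1), ((2:ℝ)^j + (xj j : ℝ) * Real.sqrt ((2:ℝ)^j))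
        = ∑ j ∈ Finset.range (J+1), (2:ℝ)^j
          + ∑ j ∈ Finset.range (J+1), (xj j : ℝ) * Real.sqrt ((2:ℝ)^j) :=
      Finset.sum_add_distrib
    have h4 : ∑ j ∈ Finset.range (J+1), (2:ℝ)^j ≤ 2 * Kn := by
      rw [geom_sum_eq (by norm_num : (2:ℝ) ≠ 1)]
      have h2J : ((2:ℝ))^J ≤ Kn := by
        have := Nat.pow_log_le_self 2 (by omega : Kn ≠ 0)
        rw [← hJd] at this
        calc ((2:ℝ))^J = ((2^J : ℕ) : ℝ) := by push_cast; ring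
          _ ≤ Kn := by exact_mod_cast this
      rw [pow_succ]
      have : (0:ℝ) < 2 - 1 := by norm_num
      rw [div_le_iff₀ this]
      nlinarith [h2J]
    have h5 : ∑ j ∈ Finset.range (J+1), (xj j : ℝ) * Real.sqrt ((2:ℝ)^j)
        ≤ (16/5) * n34 + (7/2) * n34 := by
      calc ∑ j ∈ Finset.range (J+1), (xj j : ℝ) * Real.sqrt ((2:ℝ)^j)
          ≤ ∑ j ∈ Finset.range (J+1), g j := Finset.sum_le_sum (fun j _ => hpoint j)
        _ ≤ ∑ j ∈ Finset.range (M+1), g j := by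
            apply Finset.sum_le_sum_of_subset_of_nonneg
            · apply Finset.range_subset_range.2
              omega
            · intro j _ _
              exact hgnn j
        _ ≤ (16/5) * n34 + (7/2) * n34 := hsumg
    linarith
  -- final assembly
  have hKnR : (Kn : ℝ) ≤ (n:ℝ)^((2:ℝ)/3) := by
    rw [hKnd]
    exact Nat.floor_le (by positivity)
  have h2334 : (n:ℝ)^((2:ℝ)/3) ≤ (n:ℝ)^((3:ℝ)/4) := by
    apply Real.rpow_le_rpow_of_exponent_le (by exact_mod_cast hn1)
    norm_num
  have hn34eq : n34 = (n:ℝ)^((3:ℝ)/4) := by rw [hn34d]; exact sqrt34 (n:ℝ) hn0R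
  have hF1R : (F1.card : ℝ) ≤ (Yχ.card : ℝ) + (n:ℝ)^((2:ℝ)/3) := by
    calc (F1.card : ℝ) ≤ ((Yχ.card + B1 * B1 : ℕ) : ℝ) := by exact_mod_cast hF1card
      _ = (Yχ.card : ℝ) + ((B1 * B1 : ℕ) : ℝ) := by push_cast; ring
      _ ≤ (Yχ.card : ℝ) + (Kn : ℝ) := by
          have : ((B1 * B1 : ℕ) : ℝ) ≤ (Kn : ℝ) := by exact_mod_cast hB1Kn
          linarith
      _ ≤ (Yχ.card : ℝ) + (n:ℝ)^((2:ℝ)/3) := by linarith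
  rw [hcardA, hcardχ]
  have hcast : (Fn.card : ℝ) = (F1.card : ℝ) + (F2.card : ℝ) := by
    rw [← hsplitc]; push_cast; ring
  calc (Fn.card : ℝ) = (F1.card : ℝ) + (F2.card : ℝ) := hcast
    _ ≤ ((Yχ.card : ℝ) + (n:ℝ)^((2:ℝ)/3)) + (2 * Kn + ((16/5) * n34 + (7/2) * n34)) := by
        linarith
    _ ≤ (Yχ.card : ℝ) + 3 * (n:ℝ)^((3:ℝ)/4) + (67/10) * (n:ℝ)^((3:ℝ)/4) := by
        rw [hn34eq] at *
        nlinarith [hKnR, h2334]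
    _ ≤ (Yχ.card : ℝ) + 11 * (n:ℝ)^((3:ℝ)/4) := by
        have : (0:ℝ) ≤ (n:ℝ)^((3:ℝ)/4) := by positivity
        linarith
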